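/- For every n ≥ 1, the evaluation of the Ramanujan polynomial at 1 satisfies R_n(1) = n^{n−1}, the number of rooted labeled trees on n vertices. -/
import Mathlib

open Polynomial

/-- The Ramanujan polynomials `R n`, defined by `R 1 = 1` and
`R (n+1) = n (1 + y) R n + y² R n′`. -/
noncomputable def ramanujanR : ℕ → Polynomial ℤ
  | 0 => 1
  | 1 => 1
  | (n + 2) =>
      ((n : Polynomial ℤ) + 1) * (1 + X) * ramanujanR (n + 1) +
        X ^ 2 * derivative (ramanujanR (n + 1))

/-- The triangle `rV m k` of auxiliary polynomials: `rV m k` is (morally) the `k`-th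
derivative in `y`, evaluated at `y = 1`, of the bivariate Ramanujan polynomial
`R_{m+1}(x, y)`, as a polynomial in `x`. -/
noncomputable def rV : ℕ → ℕ → Polynomial ℤ
  | 0, 0 => 1
  | 0, _ + 1 => 0
  | m + 1, k =>
      (X + ((2 * m + 1 + 2 * k : ℕ) : Polynomial ℤ)) * rV m k
        + ((k * (m + k) : ℕ) : Polynomial ℤ) * rV m (k - 1) + rV m (k + 1)

lemma rV_succ (m k : ℕ) : rV (m + 1) k =
    (X + ((2 * m + 1 + 2 * k : ℕ) : Polynomial ℤ)) * rV m k
      + ((k * (m + k) : ℕ) : Polynomial ℤ) * rV m (k - 1) + rV m (k + 1) := rfl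

/-- The key identity: composing a level-`m+1` entry with `X - 1` is expressible
in terms of level-`m` entries. -/
lemma rV_keyK : ∀ m k : ℕ, (rV (m + 1) k).comp (X - 1) =
    (X + ((m + k : ℕ) : Polynomial ℤ)) * rV m k
      + ((k * (m + k) : ℕ) : Polynomial ℤ) * rV m (k - 1) := by
  intro m
  induction m with
  | zero =>
    intro k
    match k with
    | 0 => rw [rV_succ]; simp [rV]
    | 1 => rw [rV_succ]; simp [rV]
    | (j + 2) => rw [rV_succ]; simp [rV]
  | succ m ih =>
    intro k
    match k with
    | 0 =>
      rw [rV_succ (m+1) 0]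
      simp only [add_comp, mul_comp, X_comp, natCast_comp]
      rw [ih 0, ih 1]
      rw [rV_succ m 0]
      simp only [Nat.zero_sub, Nat.sub_self, Nat.add_sub_cancel, Nat.zero_add, Nat.add_zero]
      push_cast
      ring
    | (j + 1) =>
      rw [rV_succ (m+1) (j+1)]
      simp only [add_comp, mul_comp, X_comp, natCast_comp, Nat.add_sub_cancel]
      rw [ih (j+1), ih j, ih (j+2)]
      rw [rV_succ m (j+1), rV_succ m j]
      simp only [Nat.add_sub_cancel]
      push_cast
      ring

/-- The zeroth column: `rV m 0 = (X + m)^m`. -/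
lemma rV_zero : ∀ m : ℕ, rV m 0 = (X + (m : Polynomial ℤ)) ^ m := by
  intro m
  induction m with
  | zero => simp [rV]
  | succ m ih =>
    have h := rV_keyK m 0
    rw [ih] at h
    have h2 : rV (m + 1) 0 = ((rV (m + 1) 0).comp (X - 1)).comp (X + 1) := by
      rw [comp_assoc]; simp
    rw [h2, h]
    simp only [Nat.add_zero, Nat.zero_mul, Nat.cast_zero, zero_mul, add_zero, add_comp,
      mul_comp, X_comp, natCast_comp, pow_comp]
    push_cast
    ring

lemma iter_dX (p : Polynomial ℤ) : ∀ k : ℕ, derivative^[k + 1] (X * p) =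
    X * derivative^[k + 1] p + ((k + 1 : ℕ) : Polynomial ℤ) * derivative^[k] p := by
  intro k
  induction k with
  | zero => simp [derivative_mul]; ring
  | succ k ih =>
    rw [Function.iterate_succ_apply' derivative (k + 1) (X * p), ih]
    rw [Function.iterate_succ_apply' derivative (k + 1) p,
      Function.iterate_succ_apply' derivative k p]
    generalize derivative^[k] p = a
    simp only [derivative_add, derivative_mul, derivative_X, derivative_natCast]
    push_cast
    ring

lemma iter_dX2 (p : Polynomial ℤ) : ∀ k : ℕ, derivative^[k + 2] (X ^ 2 * p) =
    X ^ 2 * derivative^[k + 2] p + ((2 * k + 4 : ℕ) : Polynomial ℤ) * X * derivative^[k + 1] p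
      + (((k + 1) * (k + 2) : ℕ) : Polynomial ℤ) * derivative^[k] p := by
  intro k
  induction k with
  | zero =>
    rw [show derivative^[0 + 2] (X ^ 2 * p) = derivative (derivative (X ^ 2 * p)) from rfl,
      show derivative^[0 + 2] p = derivative (derivative p) from rfl,
      show derivative^[0 + 1] p = derivative p from rfl,
      show derivative^[0] p = p from rfl, pow_two]
    simp only [derivative_mul, derivative_X, derivative_add, derivative_one]
    push_cast
    ring
  | succ k ih =>
    rw [Function.iterate_succ_apply' derivative (k + 2) (X ^ 2 * p), ih]
    rw [Function.iterate_succ_apply' derivative (k + 2) p,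
      Function.iterate_succ_apply' derivative (k + 1) p,
      Function.iterate_succ_apply' derivative k p]
    generalize derivative^[k] p = a
    simp only [derivative_add, derivative_mul, derivative_X, derivative_natCast, pow_two]
    push_cast
    ring

/-- The bridge: derivatives of `ramanujanR (m+1)` evaluated at `1` agree with the
`rV` triangle evaluated at `1`. -/
lemma iter_d_add (k : ℕ) (p q : Polynomial ℤ) :
    derivative^[k] (p + q) = derivative^[k] p + derivative^[k] q := by
  induction k generalizing p q with
  | zero => rfl
  | succ k ih =>
    rw [Function.iterate_succ_apply, Function.iterate_succ_apply,
      Function.iterate_succ_apply, derivative_add, ih]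

lemma bridge : ∀ m k : ℕ, (derivative^[k] (ramanujanR (m + 1))).eval 1 = (rV m k).eval 1 := by
  intro m
  induction m with
  | zero =>
    intro k
    match k with
    | 0 => simp [ramanujanR, rV]
    | (k + 1) =>
      have h0 : derivative^[k + 1] (ramanujanR 1) = 0 := by
        rw [show ramanujanR 1 = (1 : Polynomial ℤ) from rfl,
          Function.iterate_succ_apply, derivative_one]
        exact iterate_derivative_zero
      rw [h0]
      simp [rV]
  | succ m ih =>
    intro k
    have e1 : ramanujanR (m + 2) =
        C ((m : ℤ) + 1) * (ramanujanR (m + 1) + X * ramanujanR (m + 1))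
          + X ^ 2 * derivative (ramanujanR (m + 1)) := by
      show ((m : Polynomial ℤ) + 1) * (1 + X) * ramanujanR (m + 1) +
          X ^ 2 * derivative (ramanujanR (m + 1)) = _
      rw [map_add, C_1, C_eq_natCast]
      ring
    set R := ramanujanR (m + 1) with hRdef
    have ih1 : (derivative R).eval 1 = (rV m 1).eval 1 := ih 1
    match k with
    | 0 =>
      rw [show derivative^[0] (ramanujanR (m + 2)) = ramanujanR (m + 2) from rfl, e1]
      rw [rV_succ m 0]
      simp only [eval_add, eval_mul, eval_pow, eval_X, eval_one, eval_C, eval_natCast]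
      rw [show eval 1 R = eval 1 (rV m 0) from ih 0, ih1]
      rw [show (0 : ℕ) - 1 = 0 from rfl]
      push_cast
      ring
    | 1 =>
      rw [show derivative^[1] (ramanujanR (m + 2)) = derivative (ramanujanR (m + 2)) from rfl,
        e1]
      rw [rV_succ m 1]
      simp only [derivative_add, derivative_mul, derivative_X, derivative_C, derivative_one,
        derivative_pow, pow_two]
      simp only [eval_add, eval_mul, eval_pow, eval_X, eval_one, eval_C, eval_natCast,
        eval_zero]
      rw [show eval 1 R = eval 1 (rV m 0) from ih 0, ih1,
        show (derivative (derivative R)).eval 1 = (rV m 2).eval 1 from ih 2]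
      rw [show (1 : ℕ) - 1 = 0 from rfl]
      push_cast
      ring
    | (j + 2) =>
      rw [e1, iter_d_add, iterate_derivative_C_mul, iter_d_add]
      have hxr := iter_dX R (j + 1)
      rw [show j + 1 + 1 = j + 2 from rfl] at hxr
      have hx2 := iter_dX2 (derivative R) j
      rw [show derivative^[j + 2] (derivative R) = derivative^[j + 3] R from
            (Function.iterate_succ_apply derivative (j + 2) R).symm,
          show derivative^[j + 1] (derivative R) = derivative^[j + 2] R from
            (Function.iterate_succ_apply derivative (j + 1) R).symm,
          show derivative^[j] (derivative R) = derivative^[j + 1] R from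
            (Function.iterate_succ_apply derivative j R).symm] at hx2
      rw [hxr, hx2]
      rw [rV_succ m (j + 2)]
      simp only [eval_add, eval_mul, eval_pow, eval_X, eval_one, eval_C, eval_natCast]
      rw [ih (j + 1), ih (j + 2), ih (j + 3)]
      rw [show j + 2 - 1 = j + 1 from rfl]
      push_cast
      ring

/-- `R_n(1) = n^(n-1)`, the number of rooted labeled trees on `n` vertices. -/
theorem ramanujanR_eval_one (n : ℕ) (hn : 1 ≤ n) :
    (ramanujanR n).eval 1 = (n : ℤ) ^ (n - 1) := by
  obtain ⟨m, rfl⟩ : ∃ m, n = m + 1 := ⟨n - 1, (Nat.succ_pred_eq_of_pos hn).symm⟩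
  have h := bridge m 0
  rw [show derivative^[0] (ramanujanR (m + 1)) = ramanujanR (m + 1) from rfl, rV_zero m] at h
  rw [h]
  simp only [eval_pow, eval_add, eval_X, eval_natCast, Nat.add_sub_cancel]
  push_cast
  ring
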